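/- arXiv:2603.09019 — 2 statements merged into one kernel-verified Lean document; each statement's English description precedes it below -/
import Mathlib

section
/- b − aμ = ∑_{i=1}^n T_i (W_i − L_i) · ∏_{j≠i} (1 − 2T_j). -/
/-!
Write `g x = -1` if `x = 1/2` and `g x = 1` otherwise, so that `(-1)^S = ∏ⱼ g (Xⱼ)`. By
independence `a = ∏ⱼ E[g Xⱼ]` and `b = ∑ᵢ E[Xᵢ g Xᵢ] ∏_{j ≠ i} E[g Xⱼ]`, hence
`b - aμ = ∑ᵢ (E[Xᵢ g Xᵢ] - E[Xᵢ] E[g Xᵢ]) ∏_{j ≠ i} E[g Xⱼ]`. For a variable with law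
`(Lᵢ, Tᵢ, Wᵢ)` on `{0, 1/2, 1}` one has `E[g Xᵢ] = 1 - 2Tᵢ` and the covariance
`E[Xᵢ g Xᵢ] - E[Xᵢ] E[g Xᵢ]` equals `Tᵢ (Wᵢ - Lᵢ)`.
-/

open MeasureTheory ProbabilityTheory Finset
open scoped Classical

section FiniteRange

variable {Ω α E : Type*} [MeasurableSpace Ω] [NormedAddCommGroup E] {μ : Measure Ω} {X : Ω → α}
  {s : Finset α}

lemma comp_ae_eq_sum_indicator (hs : ∀ᵐ ω ∂μ, X ω ∈ s) (ψ : α → E) :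
    (fun ω ↦ ψ (X ω)) =ᵐ[μ] fun ω ↦ ∑ x ∈ s, (X ⁻¹' {x}).indicator (fun _ ↦ ψ x) ω := by
  filter_upwards [hs] with ω hω
  simp [Set.indicator_apply, hω]

variable [MeasurableSpace α] [MeasurableSingletonClass α]

lemma ae_mem_of_sum_measureReal_preimage_singleton_eq_one [IsProbabilityMeasure μ]
    (hX : Measurable X) (h : ∑ x ∈ s, μ.real (X ⁻¹' {x}) = 1) : ∀ᵐ ω ∂μ, X ω ∈ s := by
  have hmeas : MeasurableSet (X ⁻¹' s) := hX s.measurableSet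
  refine (mem_ae_iff_prob_eq_one hmeas).mpr ((ENNReal.toReal_eq_one_iff _).mp ?_)
  rw [← measureReal_def, ← sum_measureReal_preimage_singleton s
    fun x _ ↦ hX (measurableSet_singleton x), h]

lemma integrable_comp_of_ae_mem [IsFiniteMeasure μ] (hX : Measurable X)
    (hs : ∀ᵐ ω ∂μ, X ω ∈ s) (ψ : α → E) : Integrable (fun ω ↦ ψ (X ω)) μ :=
  (integrable_finsetSum _ fun x _ ↦ (integrable_const (ψ x)).indicator
    (hX (measurableSet_singleton x))).congr (comp_ae_eq_sum_indicator hs ψ).symm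

lemma integral_comp_eq_sum_of_ae_mem [NormedSpace ℝ E] [CompleteSpace E] [IsFiniteMeasure μ]
    (hX : Measurable X) (hs : ∀ᵐ ω ∂μ, X ω ∈ s) (ψ : α → E) :
    ∫ ω, ψ (X ω) ∂μ = ∑ x ∈ s, μ.real (X ⁻¹' {x}) • ψ x := by
  rw [integral_congr_ae (comp_ae_eq_sum_indicator hs ψ), integral_finsetSum]
  · exact sum_congr rfl fun x _ ↦ integral_indicator_const _ (hX (measurableSet_singleton x))
  · exact fun x _ ↦ (integrable_const (ψ x)).indicator (hX (measurableSet_singleton x))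

end FiniteRange

lemma ProbabilityTheory.iIndepFun.integral_comp_mul_prod_erase {Ω ι 𝓧 : Type*} [MeasurableSpace Ω]
    {μ : Measure Ω} [Fintype ι] [DecidableEq ι] [MeasurableSpace 𝓧] {X : ι → Ω → 𝓧}
    (hX : iIndepFun X μ) (mX : ∀ i, Measurable (X i)) {φ f : 𝓧 → ℝ} (hφ : Measurable φ)
    (hf : Measurable f) (i : ι) :
    ∫ ω, φ (X i ω) * ∏ j ∈ univ.erase i, f (X j ω) ∂μ
      = (∫ ω, φ (X i ω) ∂μ) * ∏ j ∈ univ.erase i, ∫ ω, f (X j ω) ∂μ := by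
  have hprod := hX.integral_fun_prod_comp (f := Function.update (fun _ ↦ f) i φ)
    (fun j ↦ (mX j).aemeasurable) fun j ↦ by
      rcases eq_or_ne j i with rfl | hj
      · simpa using hφ.aestronglyMeasurable
      · simpa [hj] using hf.aestronglyMeasurable
  simp only [← mul_prod_erase univ _ (mem_univ i), Function.update_self] at hprod
  have hupdate : ∀ j ∈ univ.erase i, Function.update (fun _ ↦ f) i φ j = f :=
    fun j hj ↦ Function.update_of_ne (ne_of_mem_erase hj) _ _
  simp only [fun ω ↦ prod_congr rfl fun j hj ↦ congrFun (hupdate j hj) (X j ω),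
    prod_congr rfl fun j hj ↦ congrArg (fun g ↦ ∫ ω, g (X j ω) ∂μ) (hupdate j hj)] at hprod
  exact hprod

lemma ProbabilityTheory.iIndepFun.integral_sum_mul_prod_comp {Ω ι : Type*} [MeasurableSpace Ω]
    {μ : Measure Ω} [Fintype ι] [DecidableEq ι] {X : ι → Ω → ℝ} (hX : iIndepFun X μ)
    (mX : ∀ i, Measurable (X i)) (hint : ∀ i, Integrable (X i) μ) {g : ℝ → ℝ} (hg : Measurable g)
    (hg_le : ∀ x, |g x| ≤ 1) :
    ∫ ω, (∑ i, X i ω) * ∏ j, g (X j ω) ∂μ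
      = ∑ i, (∫ ω, X i ω * g (X i ω) ∂μ) * ∏ j ∈ univ.erase i, ∫ ω, g (X j ω) ∂μ := by
  have hprod_le : ∀ ω, ‖∏ j, g (X j ω)‖ ≤ 1 := fun ω ↦ by
    rw [norm_prod]
    exact prod_le_one (fun _ _ ↦ norm_nonneg _) fun j _ ↦ hg_le _
  have hprod_meas : Measurable fun ω ↦ ∏ j, g (X j ω) :=
    Finset.measurable_fun_prod (f := fun j ω ↦ g (X j ω)) _ fun j _ ↦ hg.comp (mX j)
  simp only [sum_mul]
  rw [integral_finsetSum _ fun i _ ↦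
    (hint i).mul_bdd hprod_meas.aestronglyMeasurable (.of_forall hprod_le)]
  refine sum_congr rfl fun i _ ↦ ?_
  have hsplit : ∀ ω, X i ω * ∏ j, g (X j ω) = X i ω * g (X i ω) * ∏ j ∈ univ.erase i, g (X j ω) :=
    fun ω ↦ by rw [← mul_prod_erase univ _ (mem_univ i), mul_assoc]
  simp only [hsplit]
  exact hX.integral_comp_mul_prod_erase mX (φ := fun x ↦ x * g x) (measurable_id.mul hg) hg i

lemma neg_one_pow_card_filter_eq_prod {ι R : Type*} [CommMonoid R] [HasDistribNeg R]
    (s : Finset ι) (p : ι → Prop) [DecidablePred p] :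
    (-1 : R) ^ #(s.filter p) = ∏ i ∈ s, if p i then -1 else 1 := by
  rw [prod_ite, prod_const, prod_const_one, mul_one]

section Trinomial

variable {Ω : Type*} [MeasurableSpace Ω] {μ : Measure Ω} [IsProbabilityMeasure μ] {Y : Ω → ℝ}
  {t w : ℝ}

lemma ae_mem_of_trinomial (hY : Measurable Y) (ht : μ.real (Y ⁻¹' {1/2}) = t)
    (hw : μ.real (Y ⁻¹' {1}) = w) (hl : μ.real (Y ⁻¹' {0}) = 1 - t - w) :
    ∀ᵐ ω ∂μ, Y ω ∈ ({1/2, 1, 0} : Finset ℝ) := by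
  refine ae_mem_of_sum_measureReal_preimage_singleton_eq_one hY ?_
  rw [sum_insert (by norm_num), sum_insert (by norm_num), sum_singleton, ht, hw, hl]
  ring

lemma integral_comp_of_trinomial (hY : Measurable Y) (ht : μ.real (Y ⁻¹' {1/2}) = t)
    (hw : μ.real (Y ⁻¹' {1}) = w) (hl : μ.real (Y ⁻¹' {0}) = 1 - t - w) (ψ : ℝ → ℝ) :
    ∫ ω, ψ (Y ω) ∂μ = t * ψ (1/2) + w * ψ 1 + (1 - t - w) * ψ 0 := by
  rw [integral_comp_eq_sum_of_ae_mem hY (ae_mem_of_trinomial hY ht hw hl), sum_insert (by norm_num),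
    sum_insert (by norm_num), sum_singleton, ht, hw, hl, smul_eq_mul, smul_eq_mul, smul_eq_mul,
    add_assoc]

end Trinomial

theorem poisson_trinomial_b_sub_a_mul_mu_general
    {Ω : Type*} [MeasureSpace Ω] [IsProbabilityMeasure (ℙ : Measure Ω)]
    {n : ℕ} (X : Fin n → Ω → ℝ) (T W : Fin n → ℝ)
    (hmeas : ∀ i, Measurable (X i))
    (hindep : iIndepFun X ℙ)
    (hT : ∀ i, (ℙ {ω | X i ω = 1/2}).toReal = T i)
    (hW : ∀ i, (ℙ {ω | X i ω = 1}).toReal = W i)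
    (hL : ∀ i, (ℙ {ω | X i ω = 0}).toReal = 1 - T i - W i)
    (μ a b : ℝ)
    (hμ : μ = ∫ ω, ∑ i, X i ω ∂ℙ)
    (ha : a = ∫ ω, (-1 : ℝ) ^ (univ.filter (fun i => X i ω = 1/2)).card ∂ℙ)
    (hb : b = ∫ ω, (∑ i, X i ω) *
        (-1 : ℝ) ^ (univ.filter (fun i => X i ω = 1/2)).card ∂ℙ) :
    b - a * μ = ∑ i, T i * (W i - (1 - T i - W i)) *
        ∏ j ∈ univ.erase i, (1 - 2 * T j) := by
  set g : ℝ → ℝ := fun x ↦ if x = 1/2 then -1 else 1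
  have hg : Measurable g := measurable_const.ite (measurableSet_singleton _) measurable_const
  have hg_le : ∀ x, |g x| ≤ 1 := fun x ↦ by unfold g; split_ifs <;> norm_num
  have hE : ∀ i (ψ : ℝ → ℝ), ∫ ω, ψ (X i ω) = T i * ψ (1/2) + W i * ψ 1 + (1 - T i - W i) * ψ 0 :=
    fun i ↦ integral_comp_of_trinomial (hmeas i) (hT i) (hW i) (hL i)
  have hsign : ∀ ω, (-1 : ℝ) ^ #(univ.filter fun i ↦ X i ω = 1/2) = ∏ j, g (X j ω) :=
    fun ω ↦ neg_one_pow_card_filter_eq_prod _ _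
  have hEg : ∀ j, ∫ ω, g (X j ω) = 1 - 2 * T j := fun j ↦ by rw [hE]; norm_num [g]; ring
  have ha' : a = ∏ j, (1 - 2 * T j) := by
    simp_rw [ha, hsign]
    rw [hindep.integral_fun_prod_comp
      (fun j ↦ (hmeas j).aemeasurable) fun _ ↦ hg.aestronglyMeasurable]
    exact prod_congr rfl fun j _ ↦ hEg j
  have hint : ∀ i, Integrable (X i) := fun i ↦
    integrable_comp_of_ae_mem (hmeas i) (ae_mem_of_trinomial (hmeas i) (hT i) (hW i) (hL i)) id
  have hμ' : μ = ∑ i, (T i / 2 + W i) := by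
    rw [hμ, integral_finsetSum _ fun i _ ↦ hint i]
    exact sum_congr rfl fun i _ ↦ (hE i id).trans (by norm_num; ring)
  have hb' : b = ∑ i, (W i - T i / 2) * ∏ j ∈ univ.erase i, (1 - 2 * T j) := by
    simp_rw [hb, hsign]
    rw [hindep.integral_sum_mul_prod_comp hmeas hint hg hg_le]
    refine sum_congr rfl fun i _ ↦ ?_
    rw [hE i fun x ↦ x * g x, prod_congr rfl fun j _ ↦ hEg j]
    congr 1
    norm_num [g]
    ring
  rw [ha', hμ', hb', mul_sum, ← sum_sub_distrib]
  refine sum_congr rfl fun i _ ↦ ?_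
  rw [← mul_prod_erase univ _ (mem_univ i)]
  ring

/-- `b - aμ = ∑_i T_i (W_i - L_i) ∏_{j ≠ i} (1 - 2 T_j)`. -/
theorem poisson_trinomial_b_sub_a_mul_mu
    {Ω : Type*} [MeasureSpace Ω] [IsProbabilityMeasure (ℙ : Measure Ω)]
    {n : ℕ} (X : Fin n → Ω → ℝ) (T W : Fin n → ℝ)
    (hmeas : ∀ i, Measurable (X i))
    (hindep : iIndepFun X ℙ)
    (hT0 : ∀ i, 0 ≤ T i) (hW0 : ∀ i, 0 ≤ W i) (hTW1 : ∀ i, T i + W i ≤ 1)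
    (hT : ∀ i, (ℙ {ω | X i ω = 1/2}).toReal = T i)
    (hW : ∀ i, (ℙ {ω | X i ω = 1}).toReal = W i)
    (hL : ∀ i, (ℙ {ω | X i ω = 0}).toReal = 1 - T i - W i)
    (μ a b : ℝ)
    (hμ : μ = ∫ ω, ∑ i, X i ω ∂ℙ)
    (ha : a = ∫ ω, (-1 : ℝ) ^ (univ.filter (fun i => X i ω = 1/2)).card ∂ℙ)
    (hb : b = ∫ ω, (∑ i, X i ω) *
        (-1 : ℝ) ^ (univ.filter (fun i => X i ω = 1/2)).card ∂ℙ) :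
    b - a * μ = ∑ i, T i * (W i - (1 - T i - W i)) *
        ∏ j ∈ univ.erase i, (1 - 2 * T j) :=
  poisson_trinomial_b_sub_a_mul_mu_general X T W hmeas hindep hT hW hL μ a b hμ ha hb
end

section
/- |b − aμ| ≤ (1 − |a|)/2. -/
/-!
Let `s(x) = -1` for `x = 1/2` and `s(x) = 1` otherwise, so that the sign `(-1)^S` is
`∏ s(X_i)`. By independence `a = ∏ A_i` with `A_i = E s(X_i) = 1 - 2T_i`, and expanding
`E[(∑ X_i) ∏ s(X_j)]` term by term gives `b - aμ = ∑_i c_i ∏_{j ≠ i} A_j` with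
`c_i = Cov(X_i, s(X_i)) = T_i(T_i + 2W_i - 1)`. Since `W_i ≤ 1 - T_i`,
`|c_i| ≤ T_i(1 - T_i) ≤ min(T_i, 1 - T_i) = (1 - |A_i|)/2`, and an induction on the number of
factors shows that such bounds on the `c_i` give `|∑_i c_i ∏_{j ≠ i} A_j| ≤ (1 - |∏ A_i|)/2`.
-/

open MeasureTheory ProbabilityTheory Finset
open scoped Classical

lemma Finset.prod_apply_update {ι α M : Type*} [Fintype ι] [DecidableEq ι] [CommMonoid M]
    (Φ : ι → α → M) (g : ι → α) (i : ι) (v : α) :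
    ∏ j, Φ j (Function.update g i v j) = Φ i v * ∏ j ∈ univ.erase i, Φ j (g j) := by
  simp only [Function.apply_update Φ, prod_update_of_mem (mem_univ i), sdiff_singleton_eq_erase]

section FiniteRange

variable {Ω α : Type*} [MeasurableSpace Ω] [MeasurableSpace α] [MeasurableSingletonClass α]
  {P : Measure Ω} {Y : Ω → α}

lemma ae_mem_of_sum_measureReal_preimage_singleton [IsProbabilityMeasure P] (hY : Measurable Y)
    {s : Finset α} (hs : ∑ x ∈ s, P.real (Y ⁻¹' {x}) = 1) : ∀ᵐ ω ∂P, Y ω ∈ s := by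
  rw [sum_measureReal_preimage_singleton s fun x _ => hY (measurableSet_singleton x)] at hs
  change ∀ᵐ ω ∂P, ω ∈ Y ⁻¹' s
  rw [ae_mem_iff_measure_eq (hY s.measurableSet).nullMeasurableSet, measure_univ,
    ← ENNReal.toReal_eq_one_iff]
  exact hs

lemma integral_comp_eq_sum_of_ae_mem_s6 [IsFiniteMeasure P] (hY : Measurable Y) {s : Finset α}
    (hs : ∀ᵐ ω ∂P, Y ω ∈ s) (g : α → ℝ) :
    ∫ ω, g (Y ω) ∂P = ∑ x ∈ s, P.real (Y ⁻¹' {x}) * g x := by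
  have hfib : ∀ x, MeasurableSet (Y ⁻¹' {x}) := fun x => hY (measurableSet_singleton x)
  have hsimple : (fun ω => g (Y ω)) =ᵐ[P]
      fun ω => ∑ x ∈ s, (Y ⁻¹' {x}).indicator (fun _ => g x) ω := by
    filter_upwards [hs] with ω hω
    simp [Set.indicator_apply, hω]
  rw [integral_congr_ae hsimple,
    integral_finsetSum _ fun x _ => (integrable_const _).indicator (hfib x)]
  simp [integral_indicator_const _ (hfib _)]

end FiniteRange

section Independence

variable {Ω ι : Type*} [MeasurableSpace Ω] {P : Measure Ω} [Fintype ι] [DecidableEq ι]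
  {X : ι → Ω → ℝ} {f : ℝ → ℝ}

lemma ProbabilityTheory.iIndepFun.integral_mul_prod_comp (hX : iIndepFun X P)
    (hXm : ∀ i, AEMeasurable (X i) P) (hf : Measurable f) (i : ι) :
    ∫ ω, X i ω * ∏ j, f (X j ω) ∂P
      = (∫ ω, X i ω * f (X i ω) ∂P) * ∏ j ∈ univ.erase i, ∫ ω, f (X j ω) ∂P := by
  let F := Function.update (fun _ : ι => f) i (fun x => x * f x)
  have hF : ∀ j, Measurable (F j) := by
    intro j
    rcases eq_or_ne j i with rfl | hj
    · simp only [F, Function.update_self]; fun_prop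
    · simpa [F, hj] using hf
  have hpt : ∀ ω, X i ω * ∏ j, f (X j ω) = ∏ j, F j (X j ω) := fun ω =>
    calc X i ω * ∏ j, f (X j ω) = X i ω * f (X i ω) * ∏ j ∈ univ.erase i, f (X j ω) := by
          rw [← mul_prod_erase univ _ (mem_univ i), mul_assoc]
      _ = ∏ j, F j (X j ω) := (prod_apply_update (fun j (g : ℝ → ℝ) => g (X j ω))
          (fun _ => f) i fun x => x * f x).symm
  simp_rw [hpt]
  rw [hX.integral_fun_prod_comp hXm fun j => (hF j).aestronglyMeasurable]
  exact prod_apply_update (fun j (g : ℝ → ℝ) => ∫ ω, g (X j ω) ∂P) (fun _ => f) i _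

lemma ProbabilityTheory.iIndepFun.integral_sum_mul_prod_comp_sub (hX : iIndepFun X P)
    (hXi : ∀ i, Integrable (X i) P) (hf : Measurable f) {C : ℝ} (hfC : ∀ x, |f x| ≤ C) :
    ∫ ω, (∑ i, X i ω) * ∏ j, f (X j ω) ∂P - (∫ ω, ∏ j, f (X j ω) ∂P) * ∫ ω, ∑ i, X i ω ∂P
      = ∑ i, (∫ ω, X i ω * f (X i ω) ∂P - (∫ ω, X i ω ∂P) * ∫ ω, f (X i ω) ∂P)
          * ∏ j ∈ univ.erase i, ∫ ω, f (X j ω) ∂P := by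
  have hXm : ∀ i, AEMeasurable (X i) P := fun i => (hXi i).aemeasurable
  have hprod_bound : ∀ ω, ‖∏ j, f (X j ω)‖ ≤ C ^ Fintype.card ι := fun ω => by
    rw [Real.norm_eq_abs, abs_prod, ← card_univ, ← prod_const]
    exact prod_le_prod (fun _ _ => abs_nonneg _) fun j _ => hfC _
  have hterm : ∀ i, Integrable (fun ω => X i ω * ∏ j, f (X j ω)) P := fun i =>
    (hXi i).mul_bdd (Finset.aestronglyMeasurable_fun_prod univ fun j _ =>
        (hf.comp_aemeasurable (hXm j)).aestronglyMeasurable) (ae_of_all _ hprod_bound)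
  simp_rw [sum_mul]
  rw [integral_finsetSum _ fun i _ => hterm i, integral_finsetSum _ fun i _ => hXi i,
    hX.integral_fun_prod_comp hXm fun _ => hf.aestronglyMeasurable, mul_sum, ← sum_sub_distrib]
  refine sum_congr rfl fun i _ => ?_
  rw [hX.integral_mul_prod_comp hXm hf, ← mul_prod_erase univ _ (mem_univ i)]
  ring

end Independence

lemma abs_sum_mul_prod_erase_le {ι : Type*} [DecidableEq ι] (s : Finset ι) (c A : ι → ℝ)
    (h : ∀ i ∈ s, |c i| ≤ (1 - |A i|) / 2) :
    |∑ i ∈ s, c i * ∏ j ∈ s.erase i, A j| ≤ (1 - |∏ i ∈ s, A i|) / 2 := by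
  induction s using Finset.cons_induction with
  | empty => simp
  | cons k s hk ih =>
    have hs := ih fun i hi => h i (mem_cons_of_mem hi)
    have hck := h k (mem_cons_self k s)
    have hsplit : ∑ i ∈ cons k s hk, c i * ∏ j ∈ (cons k s hk).erase i, A j
        = c k * ∏ j ∈ s, A j + A k * ∑ i ∈ s, c i * ∏ j ∈ s.erase i, A j := by
      rw [sum_cons, erase_cons, mul_sum]
      congr 1
      refine sum_congr rfl fun i hi => ?_
      rw [cons_eq_insert, erase_insert_of_ne (ne_of_mem_of_not_mem hi hk).symm,
        prod_insert fun h => hk (mem_of_mem_erase h)]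
      ring
    rw [hsplit, prod_cons, abs_mul]
    set P := |∏ j ∈ s, A j|
    have hP : P ≤ 1 := by linarith [abs_nonneg (∑ i ∈ s, c i * ∏ j ∈ s.erase i, A j)]
    calc |c k * ∏ j ∈ s, A j + A k * ∑ i ∈ s, c i * ∏ j ∈ s.erase i, A j|
        ≤ |c k| * P + |A k| * |∑ i ∈ s, c i * ∏ j ∈ s.erase i, A j| := by
          rw [← abs_mul, ← abs_mul]; exact abs_add_le _ _
      _ ≤ (1 - |A k|) / 2 * P + |A k| * ((1 - P) / 2) := by
          gcongr
      _ ≤ (1 - |A k| * P) / 2 := by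
          -- the gap is `(1 - P) * (1 - |A k|) / 2`
          nlinarith [abs_nonneg (A k), abs_nonneg (c k)]

lemma abs_mul_add_two_mul_sub_one_le {T W : ℝ} (hT : 0 ≤ T) (hW : 0 ≤ W) (hTW : T + W ≤ 1) :
    |T * (T + 2 * W - 1)| ≤ (1 - |1 - 2 * T|) / 2 :=
  calc |T * (T + 2 * W - 1)| = T * |T + 2 * W - 1| := by rw [abs_mul, abs_of_nonneg hT]
    _ ≤ T * (1 - T) := by gcongr; exact abs_le.2 ⟨by linarith, by linarith⟩
    _ ≤ (1 - |1 - 2 * T|) / 2 := by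
      rcases abs_cases (1 - 2 * T) with ⟨h, _⟩ | ⟨h, _⟩ <;> rw [h] <;> nlinarith

noncomputable def halfSign (x : ℝ) : ℝ := if x = 1 / 2 then -1 else 1

lemma measurable_halfSign : Measurable halfSign :=
  Measurable.ite (measurableSet_singleton _) measurable_const measurable_const

lemma abs_halfSign_le (x : ℝ) : |halfSign x| ≤ 1 := by
  unfold halfSign; split_ifs <;> norm_num

lemma neg_one_pow_card_filter_eq_prod_halfSign {ι : Type*} [Fintype ι] (x : ι → ℝ) :
    (-1 : ℝ) ^ #{i | x i = 1 / 2} = ∏ i, halfSign (x i) := by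
  simp only [halfSign, prod_ite, prod_const, one_pow, mul_one]

/-- `|b - aμ| ≤ (1 - |a|)/2`. -/
theorem poisson_trinomial_key_bound
    {Ω : Type*} [MeasureSpace Ω] [IsProbabilityMeasure (ℙ : Measure Ω)]
    {n : ℕ} (X : Fin n → Ω → ℝ) (T W : Fin n → ℝ)
    (hmeas : ∀ i, Measurable (X i))
    (hindep : iIndepFun X ℙ)
    (hT0 : ∀ i, 0 ≤ T i) (hW0 : ∀ i, 0 ≤ W i) (hTW1 : ∀ i, T i + W i ≤ 1)
    (hT : ∀ i, (ℙ {ω | X i ω = 1/2}).toReal = T i)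
    (hW : ∀ i, (ℙ {ω | X i ω = 1}).toReal = W i)
    (hL : ∀ i, (ℙ {ω | X i ω = 0}).toReal = 1 - T i - W i)
    (μ a b : ℝ)
    (hμ : μ = ∫ ω, ∑ i, X i ω ∂ℙ)
    (ha : a = ∫ ω, (-1 : ℝ) ^ (univ.filter (fun i => X i ω = 1/2)).card ∂ℙ)
    (hb : b = ∫ ω, (∑ i, X i ω) *
        (-1 : ℝ) ^ (univ.filter (fun i => X i ω = 1/2)).card ∂ℙ) :
    |b - a * μ| ≤ (1 - |a|) / 2 := by
  have hfibers : ∀ i, (ℙ : Measure Ω).real (X i ⁻¹' {0}) = 1 - T i - W i ∧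
      (ℙ : Measure Ω).real (X i ⁻¹' {1 / 2}) = T i ∧ (ℙ : Measure Ω).real (X i ⁻¹' {1}) = W i :=
    fun i => ⟨hL i, hT i, hW i⟩
  have hrange : ∀ i, ∀ᵐ ω, X i ω ∈ ({0, 1 / 2, 1} : Finset ℝ) := fun i =>
    ae_mem_of_sum_measureReal_preimage_singleton (hmeas i) <| by
      obtain ⟨h0, hhalf, h1⟩ := hfibers i
      rw [sum_insert (by norm_num), sum_pair (by norm_num), h0, hhalf, h1]
      ring
  have hlaw : ∀ i (g : ℝ → ℝ),
      ∫ ω, g (X i ω) = (1 - T i - W i) * g 0 + T i * g (1 / 2) + W i * g 1 := fun i g => by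
    rw [integral_comp_eq_sum_of_ae_mem_s6 (hmeas i) (hrange i), sum_insert (by norm_num),
      sum_pair (by norm_num), (hfibers i).1, (hfibers i).2.1, (hfibers i).2.2]
    ring
  have hXi : ∀ i, Integrable (X i) := fun i =>
    .of_bound (hmeas i).aestronglyMeasurable 1 <| by
      filter_upwards [hrange i] with ω hω
      simp only [mem_insert, mem_singleton] at hω
      rcases hω with h | h | h <;> norm_num [h]
  simp_rw [ha, hb, hμ, neg_one_pow_card_filter_eq_prod_halfSign,
    hindep.integral_sum_mul_prod_comp_sub hXi measurable_halfSign abs_halfSign_le,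
    hindep.integral_fun_prod_comp (fun i => (hmeas i).aemeasurable)
      fun _ => measurable_halfSign.aestronglyMeasurable]
  refine abs_sum_mul_prod_erase_le _ _ _ fun i _ => ?_
  have hsign : ∫ ω, halfSign (X i ω) = 1 - 2 * T i := by
    rw [hlaw i halfSign]; norm_num [halfSign]; ring
  have hcov : (∫ ω, X i ω * halfSign (X i ω)) - (∫ ω, X i ω) * ∫ ω, halfSign (X i ω)
      = T i * (T i + 2 * W i - 1) := by
    rw [hlaw i (fun x => x * halfSign x), hlaw i fun x => x, hsign]; norm_num [halfSign]; ring
  rw [hcov, hsign]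
  exact abs_mul_add_two_mul_sub_one_le (hT0 i) (hW0 i) (hTW1 i)
end
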